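/- arXiv:1012.4241 — 5 statements merged into one kernel-verified Lean document; each statement's English description precedes it below -/
import Mathlib

section
/- For every natural number n ≥ 1, the number S_n of strings of length n over the alphabet {0, 1, 2} that contain no occurrence of the consecutive pair 12 equals (φ^(2n+2) − φ^(−(2n+2)))/√5, where φ = (1 + √5)/2 is the golden ratio. -/
/-!
Classify strings by their first letter. Writing `a n` for the number of `12`-avoiding strings of
length `n` and `b n` for those among them not starting with `2` (exactly the strings that may follow
a `1`), one gets `a (n + 1) = 2 a n + b n` and `b (n + 1) = a n + b n`, whence
`a n = F (2n + 2)` and `b n = F (2n + 1)`. Binet's formula finishes, since `ψ = -φ⁻¹` and the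
exponent `2n + 2` is even.
-/

/-- `S n` is the number of strings (lists) of length `n` over the alphabet `{0,1,2}`
(modeled as `Fin 3`) in which the pair `12` does not occur consecutively,
i.e. `[1, 2]` is not an infix. -/
noncomputable def S (n : ℕ) : ℕ :=
  Nat.card {l : List (Fin 3) // l.length = n ∧ ¬ [1, 2] <:+: l}

namespace List

variable {α : Type*}

theorem pair_infix_cons_iff (a b c : α) (l : List α) :
    [a, b] <:+: c :: l ↔ [a, b] <:+: l ∨ (c = a ∧ l.head? = some b) := by
  rw [infix_cons_iff, cons_prefix_cons, singleton_prefix_iff_head?_eq_some, or_comm,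
    eq_comm (a := a)]

end List

section CountLists

variable {α : Type*}

noncomputable def countLists (P : List α → Prop) (n : ℕ) : ℕ :=
  Nat.card {l : List α // l.length = n ∧ P l}

instance [Finite α] (P : List α → Prop) (n : ℕ) :
    Finite {l : List α // l.length = n ∧ P l} :=
  ((List.finite_length_eq α n).subset fun _ hl => hl.1).to_subtype

theorem countLists_congr {P Q : List α → Prop} (h : ∀ l, P l ↔ Q l) (n : ℕ) :
    countLists P n = countLists Q n := by
  rw [funext fun l => propext (h l)]

theorem countLists_false (n : ℕ) : countLists (fun _ : List α => False) n = 0 := by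
  simp [countLists]

theorem countLists_zero {P : List α → Prop} (h : P []) : countLists P 0 = 1 := by
  simp only [countLists, List.length_eq_zero_iff]
  exact Nat.card_eq_one_iff_unique.mpr
    ⟨⟨fun ⟨_, hl, _⟩ ⟨_, hm, _⟩ => Subtype.ext (hl.trans hm.symm)⟩, ⟨⟨[], rfl, h⟩⟩⟩

def lengthSuccEquivSigma (P : List α → Prop) (n : ℕ) :
    {l : List α // l.length = n + 1 ∧ P l} ≃
      Σ c : α, {l : List α // l.length = n ∧ P (c :: l)} where
  toFun
    | ⟨c :: t, hl, hP⟩ => ⟨c, t, by simpa using hl, hP⟩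
  invFun
    | ⟨c, t, ht, hP⟩ => ⟨c :: t, by simp [ht], hP⟩
  left_inv := by
    rintro ⟨_ | ⟨c, t⟩, hl, hP⟩
    · simp at hl
    · rfl
  right_inv := by
    rintro ⟨c, t, ht, hP⟩
    rfl

theorem countLists_succ [Fintype α] (P : List α → Prop) (n : ℕ) :
    countLists P (n + 1) = ∑ c, countLists (fun l => P (c :: l)) n := by
  rw [countLists, Nat.card_congr (lengthSuccEquivSigma P n), Nat.card_sigma]
  rfl

end CountLists

def Avoids12 (l : List (Fin 3)) : Prop := ¬[1, 2] <:+: l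

def Avoids12HeadNeTwo (l : List (Fin 3)) : Prop := Avoids12 l ∧ l.head? ≠ some 2

theorem avoids12_cons_iff_of_ne_one {c : Fin 3} (hc : c ≠ 1) (l : List (Fin 3)) :
    Avoids12 (c :: l) ↔ Avoids12 l := by
  simp [Avoids12, List.pair_infix_cons_iff, hc]

theorem avoids12_one_cons_iff (l : List (Fin 3)) :
    Avoids12 (1 :: l) ↔ Avoids12HeadNeTwo l := by
  simp [Avoids12, Avoids12HeadNeTwo, List.pair_infix_cons_iff]

theorem countLists_avoids12_succ (n : ℕ) :
    countLists Avoids12 (n + 1) =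
      countLists Avoids12 n + countLists Avoids12HeadNeTwo n + countLists Avoids12 n := by
  rw [countLists_succ, Fin.sum_univ_three,
    countLists_congr (avoids12_cons_iff_of_ne_one (by decide)),
    countLists_congr avoids12_one_cons_iff,
    countLists_congr (avoids12_cons_iff_of_ne_one (by decide))]

theorem countLists_avoids12HeadNeTwo_succ (n : ℕ) :
    countLists Avoids12HeadNeTwo (n + 1) =
      countLists Avoids12 n + countLists Avoids12HeadNeTwo n := by
  have h0 (l : List (Fin 3)) : Avoids12HeadNeTwo (0 :: l) ↔ Avoids12 l := by
    simp [Avoids12HeadNeTwo, avoids12_cons_iff_of_ne_one]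
  have h1 (l : List (Fin 3)) : Avoids12HeadNeTwo (1 :: l) ↔ Avoids12HeadNeTwo l := by
    simp [Avoids12HeadNeTwo, avoids12_one_cons_iff]
  have h2 (l : List (Fin 3)) : Avoids12HeadNeTwo (2 :: l) ↔ False := by
    simp [Avoids12HeadNeTwo]
  rw [countLists_succ, Fin.sum_univ_three, countLists_congr h0, countLists_congr h1,
    countLists_congr h2, countLists_false, add_zero]

theorem countLists_avoids12_eq_fib (n : ℕ) :
    countLists Avoids12 n = Nat.fib (2 * n + 2) ∧
      countLists Avoids12HeadNeTwo n = Nat.fib (2 * n + 1) := by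
  induction n with
  | zero =>
    exact ⟨countLists_zero (by simp [Avoids12]),
      countLists_zero (by simp [Avoids12HeadNeTwo, Avoids12])⟩
  | succ n ih =>
    obtain ⟨ha, hb⟩ := ih
    have hfib₁ : Nat.fib (2 * (n + 1) + 1) = Nat.fib (2 * n + 1) + Nat.fib (2 * n + 2) :=
      Nat.fib_add_two
    have hfib₂ : Nat.fib (2 * (n + 1) + 2) = Nat.fib (2 * n + 2) + Nat.fib (2 * (n + 1) + 1) :=
      Nat.fib_add_two
    rw [countLists_avoids12_succ, countLists_avoids12HeadNeTwo_succ, ha, hb]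
    omega

open Real goldenRatio in
theorem coe_fib_two_mul_eq_zpow (m : ℕ) :
    (Nat.fib (2 * m) : ℝ) = (φ ^ (2 * (m : ℤ)) - φ ^ (-(2 * (m : ℤ)))) / √5 := by
  have hm : 2 * (m : ℤ) = ((2 * m : ℕ) : ℤ) := by push_cast; rfl
  rw [coe_fib_eq, zpow_neg, ← inv_zpow, inv_goldenRatio, hm, zpow_natCast, zpow_natCast,
    Even.neg_pow (even_two_mul m)]

theorem S_closed_form_general (n : ℕ) :
    (S n : ℝ) =
      (((1 + Real.sqrt 5) / 2) ^ (2 * (n : ℤ) + 2)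
        - ((1 + Real.sqrt 5) / 2) ^ (-(2 * (n : ℤ) + 2))) / Real.sqrt 5 := by
  have hS : S n = Nat.fib (2 * (n + 1)) := (countLists_avoids12_eq_fib n).1
  rw [hS, coe_fib_two_mul_eq_zpow]
  push_cast
  ring_nf

theorem S_closed_form (n : ℕ) (hn : 1 ≤ n) :
    (S n : ℝ) =
      (((1 + Real.sqrt 5) / 2) ^ (2 * (n : ℤ) + 2)
        - ((1 + Real.sqrt 5) / 2) ^ (-(2 * (n : ℤ) + 2))) / Real.sqrt 5 :=
  S_closed_form_general n
end

section
/- For every natural number n ≥ 1, the number S_n of strings of length n over the alphabet {0, 1, 2} that contain no occurrence of the consecutive pair 12 equals the Fibonacci number F_{2n+2}, where F_0 = 0, F_1 = 1, and F_{k+2} = F_{k+1} + F_k. -/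
open Finset

section Words

variable {α : Type*} [Fintype α] [DecidableEq α]

variable (α) in
def wordsOfLength : ℕ → Finset (List α)
  | 0 => {[]}
  | n + 1 => (univ ×ˢ wordsOfLength n).image fun p => p.1 :: p.2

theorem mem_wordsOfLength {n : ℕ} {l : List α} : l ∈ wordsOfLength α n ↔ l.length = n := by
  induction n generalizing l with
  | zero => simp [wordsOfLength]
  | succ n ih => cases l <;> simp [wordsOfLength, ih]

theorem card_filter_wordsOfLength_succ (p : List α → Prop) [DecidablePred p] (n : ℕ) :
    #{l ∈ wordsOfLength α (n + 1) | p l} = ∑ c, #{t ∈ wordsOfLength α n | p (c :: t)} := by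
  have cons_injective : Function.Injective fun q : α × List α => q.1 :: q.2 :=
    fun _ _ h => Prod.ext (List.cons.inj h).1 (List.cons.inj h).2
  rw [wordsOfLength, filter_image, card_image_of_injective _ cons_injective]
  simp only [card_filter, sum_product]

end Words

def avoid12Count (pre : List (Fin 3)) (n : ℕ) : ℕ :=
  #{l ∈ wordsOfLength (Fin 3) n | ¬ [1, 2] <:+: pre ++ l}

theorem avoid12Count_nil_succ (n : ℕ) :
    avoid12Count [] (n + 1) = 2 * avoid12Count [] n + avoid12Count [1] n := by
  simp only [avoid12Count, card_filter_wordsOfLength_succ, Fin.sum_univ_three]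
  simp only [List.nil_append, List.infix_cons_iff, List.cons_prefix_cons, one_ne_zero,
    Fin.isValue, Fin.reduceEq, false_and, false_or, true_and, not_or, List.cons_append]
  omega

theorem avoid12Count_one_succ (n : ℕ) :
    avoid12Count [1] (n + 1) = avoid12Count [] n + avoid12Count [1] n := by
  simp only [avoid12Count, card_filter_wordsOfLength_succ, Fin.sum_univ_three]
  simp [List.infix_cons_iff]

theorem avoid12Count_eq_fib (n : ℕ) :
    avoid12Count [] n = Nat.fib (2 * n + 2) ∧ avoid12Count [1] n = Nat.fib (2 * n + 1) := by
  induction n with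
  | zero => decide
  | succ n ih =>
    have fib_odd : Nat.fib (2 * (n + 1) + 1) = Nat.fib (2 * n + 1) + Nat.fib (2 * n + 2) :=
      Nat.fib_add_two
    have fib_even : Nat.fib (2 * (n + 1) + 2) = Nat.fib (2 * n + 2) + Nat.fib (2 * (n + 1) + 1) :=
      Nat.fib_add_two
    rw [avoid12Count_nil_succ, avoid12Count_one_succ, ih.1, ih.2]
    constructor <;> omega

theorem S_eq_avoid12Count (n : ℕ) : S n = avoid12Count [] n := by
  rw [S, avoid12Count, ← Nat.card_eq_finsetCard]
  exact Nat.card_congr <| Equiv.subtypeEquivRight fun l => by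
    simp [mem_wordsOfLength]

theorem S_eq_fib_general (n : ℕ) : S n = Nat.fib (2 * n + 2) := by
  rw [S_eq_avoid12Count, (avoid12Count_eq_fib n).1]

theorem S_eq_fib (n : ℕ) (hn : 1 ≤ n) : S n = Nat.fib (2 * n + 2) :=
  S_eq_fib_general n
end

section
/- The quantities S_n satisfy the two-term linear recurrence S_n = 3·S_{n−1} − S_{n−2} for all n ≥ 3, together with the initial values S_1 = 3 and S_2 = 8. -/
/-! Prepending a letter `c` to a word `w` avoiding the block `ab` creates an occurrence of `ab`
exactly when `c = a` and `w` starts with `b`; when `a ≠ b`, such a `w` is `b` followed by an arbitrary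
`ab`-avoiding word. Hence the `|α| · S (n + 1)` extensions of words of length `n + 1` are the words
of length `n + 2` together with `S n` exceptions, `S (n + 2) + S n = |α| · S (n + 1)`. -/

open Set

section

variable {α : Type*} {a b : α}

theorem List.pair_infix_cons_iff_s2 {c : α} {l : List α} :
    [a, b] <:+: c :: l ↔ (c = a ∧ l.head? = some b) ∨ [a, b] <:+: l := by
  rw [List.infix_cons_iff, List.cons_prefix_cons]
  cases l with
  | nil => simp
  | cons d t => simp [List.cons_prefix_cons, eq_comm]

theorem List.not_pair_infix_of_length_le_one {l : List α} (hl : l.length ≤ 1) :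
    ¬ [a, b] <:+: l :=
  fun h => by simpa using h.length_le.trans hl

theorem ncard_setOf_length_eq [Finite α] (n : ℕ) :
    {l : List α | l.length = n}.ncard = Nat.card α ^ n := by
  have := Fintype.ofFinite α
  calc _ = Nat.card (List.Vector α n) := (Nat.card_coe_set_eq _).symm
    _ = Nat.card α ^ n := by simp only [Nat.card_eq_fintype_card, card_vector]

def avoidingPair (a b : α) (n : ℕ) : Set (List α) :=
  {l | l.length = n ∧ ¬ [a, b] <:+: l}

theorem avoidingPair_finite [Finite α] (n : ℕ) : (avoidingPair a b n).Finite :=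
  (List.finite_length_eq α n).subset fun _ h => h.1

theorem cons_mem_avoidingPair_iff {c : α} {l : List α} {n : ℕ} :
    c :: l ∈ avoidingPair a b (n + 1) ↔
      l ∈ avoidingPair a b n ∧ ¬ (c = a ∧ l.head? = some b) := by
  simp only [avoidingPair, mem_ofPred_eq, List.length_cons, Nat.add_right_cancel_iff,
    List.pair_infix_cons_iff_s2, not_or]
  tauto

theorem avoidingPair_of_le_one {n : ℕ} (hn : n ≤ 1) :
    avoidingPair a b n = {l | l.length = n} := by
  ext l
  simp only [avoidingPair, mem_ofPred_eq, and_iff_left_iff_imp]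
  exact fun hl => List.not_pair_infix_of_length_le_one (hl ▸ hn)

theorem ncard_avoidingPair_of_le_one [Finite α] {n : ℕ} (hn : n ≤ 1) :
    (avoidingPair a b n).ncard = Nat.card α ^ n := by
  rw [avoidingPair_of_le_one hn, ncard_setOf_length_eq]

theorem disjoint_avoidingPair_image_cons_cons (n : ℕ) (s : Set (List α)) :
    Disjoint (avoidingPair a b (n + 2)) ((fun l => a :: b :: l) '' s) := by
  rw [Set.disjoint_right]
  rintro _ ⟨l, -, rfl⟩ h
  exact (cons_mem_avoidingPair_iff.1 h).2 ⟨rfl, rfl⟩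

theorem image_cons_prod_avoidingPair (hab : a ≠ b) (n : ℕ) :
    (fun p : α × List α => p.1 :: p.2) '' (univ ×ˢ avoidingPair a b (n + 1)) =
      avoidingPair a b (n + 2) ∪ (fun l => a :: b :: l) '' avoidingPair a b n := by
  ext l
  constructor
  · rintro ⟨⟨c, l⟩, ⟨-, hl⟩, rfl⟩
    by_cases hcl : c = a ∧ l.head? = some b
    · obtain ⟨rfl, hb⟩ := hcl
      obtain ⟨t, rfl⟩ : ∃ t, l = b :: t := List.head?_eq_some_iff.1 hb
      exact Or.inr ⟨t, (cons_mem_avoidingPair_iff.1 hl).1, rfl⟩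
    · exact Or.inl (cons_mem_avoidingPair_iff.2 ⟨hl, hcl⟩)
  · rintro (hl | ⟨t, ht, rfl⟩)
    · cases l with
      | nil => exact absurd hl.1 (by simp)
      | cons c t => exact ⟨(c, t), ⟨mem_univ _, (cons_mem_avoidingPair_iff.1 hl).1⟩, rfl⟩
    · exact ⟨(a, b :: t), ⟨mem_univ _, cons_mem_avoidingPair_iff.2 ⟨ht, fun h => hab h.1.symm⟩⟩,
        rfl⟩

theorem ncard_avoidingPair_add_two [Finite α] (hab : a ≠ b) (n : ℕ) :
    (avoidingPair a b (n + 2)).ncard + (avoidingPair a b n).ncard =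
      Nat.card α * (avoidingPair a b (n + 1)).ncard := by
  have h := congrArg ncard (image_cons_prod_avoidingPair hab n)
  have hcons : Function.Injective fun p : α × List α => p.1 :: p.2 := by
    rintro ⟨c, l⟩ ⟨d, m⟩ ⟨⟩
    rfl
  have hcons₂ : Function.Injective fun l : List α => a :: b :: l :=
    List.cons_injective.comp List.cons_injective
  rwa [ncard_image_of_injective _ hcons, ncard_prod, ncard_univ,
    ncard_union_eq (disjoint_avoidingPair_image_cons_cons n _) (avoidingPair_finite _)
      ((avoidingPair_finite n).image _),
    ncard_image_of_injective _ hcons₂, eq_comm] at h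

end

theorem S_recurrence :
    (∀ n : ℕ, 3 ≤ n → (S n : ℤ) = 3 * S (n - 1) - S (n - 2)) ∧ S 1 = 3 ∧ S 2 = 8 := by
  have hS (n : ℕ) : S n = (avoidingPair (1 : Fin 3) 2 n).ncard := Nat.card_coe_set_eq _
  have hrec (n : ℕ) : S (n + 2) + S n = 3 * S (n + 1) := by
    simpa only [hS, Nat.card_fin] using ncard_avoidingPair_add_two (by decide : (1 : Fin 3) ≠ 2) n
  have h0 : S 0 = 1 := by rw [hS, ncard_avoidingPair_of_le_one zero_le_one, pow_zero]
  have h1 : S 1 = 3 := by rw [hS, ncard_avoidingPair_of_le_one le_rfl, Nat.card_fin, pow_one]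
  have h2 : S 2 = 8 := by
    have : S 2 + S 0 = 3 * S 1 := hrec 0
    omega
  refine ⟨fun n hn => ?_, h1, h2⟩
  obtain ⟨m, rfl⟩ : ∃ m, n = m + 3 := ⟨n - 3, by omega⟩
  have : S (m + 3) + S (m + 1) = 3 * S (m + 2) := hrec (m + 1)
  show (S (m + 3) : ℤ) = 3 * S (m + 2) - S (m + 1)
  omega
end

section
/- Let P_n = (3^n − S_n)/3^n be the probability that a uniformly random string of length n over the alphabet {0, 1, 2} contains at least one occurrence of the consecutive pair 12. Then P_n tends to 1 as n tends to infinity. -/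
open Filter

/-- `P n` is the probability that a uniformly random ternary string of length `n`
contains at least one occurrence of the consecutive pair `12`. -/
noncomputable def P (n : ℕ) : ℝ := ((3 : ℝ) ^ n - S n) / 3 ^ n

/-!
Cut a word of length `n` into `⌊n/m⌋` consecutive blocks of length `m = |w|` and a remainder.
A word avoiding `w` has no block equal to `w`, so over an alphabet of size `k` at most
`(k^m - 1)^⌊n/m⌋ k^(n mod m)` words avoid `w`, a fraction of at most `(1 - k^(-m))^⌊n/m⌋ → 0`
of all `k^n` words. For `w = 12` over `{0, 1, 2}` this gives `S n / 3^n ≤ (8/9)^⌊n/2⌋`.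
-/

open Topology

namespace List

variable {α : Type*}

def avoiding (w : List α) (n : ℕ) : Set (List α) := {l | l.length = n ∧ ¬ w <:+: l}

lemma avoiding_subset (w : List α) (n : ℕ) : avoiding w n ⊆ {l | l.length = n} :=
  fun _ hl => hl.1

variable [Fintype α]

lemma ncard_setOf_length_eq (n : ℕ) :
    {l : List α | l.length = n}.ncard = Fintype.card α ^ n := by
  rw [← card_vector, ← Nat.card_eq_fintype_card]
  rfl

lemma finite_avoiding (w : List α) (n : ℕ) : (avoiding w n).Finite :=
  (finite_length_eq α n).subset (avoiding_subset w n)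

lemma ncard_avoiding_le (w : List α) (n : ℕ) : (avoiding w n).ncard ≤ Fintype.card α ^ n :=
  ncard_setOf_length_eq (α := α) n ▸
    Set.ncard_le_ncard (avoiding_subset w n) (finite_length_eq α n)

lemma ncard_avoiding_length_add_le (w : List α) (n : ℕ) :
    (avoiding w (w.length + n)).ncard ≤
      (Fintype.card α ^ w.length - 1) * (avoiding w n).ncard := by
  have hblocks : ({u : List α | u.length = w.length} \ {w}).ncard =
      Fintype.card α ^ w.length - 1 := by
    rw [Set.ncard_sdiff_singleton_of_mem (show w ∈ {u : List α | u.length = w.length} from rfl),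
      ncard_setOf_length_eq]
  rw [← hblocks, ← Set.ncard_prod]
  refine Set.ncard_le_ncard_of_injOn (fun l => (l.take w.length, l.drop w.length)) ?_ ?_
    (((finite_length_eq α _).sdiff).prod (finite_avoiding w n))
  · rintro l ⟨hlen, hw⟩
    refine ⟨⟨by simp [hlen], fun h => hw ?_⟩, by simp [hlen], fun h => hw ?_⟩
    · exact h ▸ (take_prefix _ l).isInfix
    · exact h.trans (drop_suffix _ l).isInfix
  · intro l _ l' _ h
    simp only [Prod.mk.injEq] at h
    rw [← take_append_drop w.length l, ← take_append_drop w.length l', h.1, h.2]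

lemma ncard_avoiding_le_pow (w : List α) (q r : ℕ) :
    (avoiding w (w.length * q + r)).ncard ≤
      (Fintype.card α ^ w.length - 1) ^ q * Fintype.card α ^ r := by
  induction q with
  | zero => simpa using ncard_avoiding_le w r
  | succ q ih =>
    calc (avoiding w (w.length * (q + 1) + r)).ncard
        = (avoiding w (w.length + (w.length * q + r))).ncard := by ring_nf
      _ ≤ (Fintype.card α ^ w.length - 1) * (avoiding w (w.length * q + r)).ncard :=
        ncard_avoiding_length_add_le w _
      _ ≤ (Fintype.card α ^ w.length - 1) ^ (q + 1) * Fintype.card α ^ r := by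
        rw [pow_succ', mul_assoc]
        exact Nat.mul_le_mul_left _ ih

theorem tendsto_ncard_avoiding_div_pow (w : List α) (hw : w ≠ []) :
    Tendsto (fun n => ((avoiding w n).ncard : ℝ) / Fintype.card α ^ n) atTop (𝓝 0) := by
  set m := w.length
  set c := Fintype.card α
  have hm : 0 < m := length_pos_iff.mpr hw
  have hc : 0 < c := Fintype.card_pos_iff.mpr ⟨w.head hw⟩
  have hK : 0 < c ^ m := pow_pos hc m
  set ρ : ℝ := ((c ^ m - 1 : ℕ) : ℝ) / (c ^ m : ℕ)
  have hρ : ρ < 1 :=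
    (div_lt_one (by exact_mod_cast hK)).mpr (by exact_mod_cast Nat.sub_lt hK one_pos)
  have hbound (n : ℕ) : ((avoiding w n).ncard : ℝ) / c ^ n ≤ ρ ^ (n / m) := by
    have hn := (Nat.div_add_mod n m).symm
    set q := n / m
    set r := n % m
    rw [hn]
    calc ((avoiding w (m * q + r)).ncard : ℝ) / c ^ (m * q + r)
        ≤ (((c ^ m - 1) ^ q * c ^ r : ℕ) : ℝ) / c ^ (m * q + r) := by
          gcongr
          exact_mod_cast ncard_avoiding_le_pow w q r
      _ = ρ ^ q := by
          rw [div_pow]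
          push_cast
          field_simp
          ring
  refine squeeze_zero (fun n => by positivity) hbound ?_
  exact (tendsto_pow_atTop_nhds_zero_of_lt_one (by positivity) hρ).comp
    (Nat.tendsto_div_const_atTop hm.ne')

end List

theorem P_tendsto_one : Tendsto P atTop (nhds 1) := by
  have hP : P = fun n =>
      1 - ((List.avoiding [(1 : Fin 3), 2] n).ncard : ℝ) / Fintype.card (Fin 3) ^ n := by
    funext n
    rw [P, sub_div, div_self (by positivity), Fintype.card_fin]
    rfl
  simpa [hP] using (List.tendsto_ncard_avoiding_div_pow [(1 : Fin 3), 2] (by simp)).const_sub 1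
end

section
/- The B₂₃ encoding map enc from ternary strings to binary strings, defined recursively on lists over {0, 1, 2} by enc([]) = [], enc(1 :: 2 :: rest) = [1,1] ++ enc(rest), enc(0 :: rest) = [0,0] ++ enc(rest), enc(1 :: rest) = [0,1] ++ enc(rest) when the next character is not 2 (or 1 is the last character), and enc(2 :: rest) = [1,0] ++ enc(rest), is injective: two distinct ternary strings always receive distinct binary codes. -/
/-- The B₂₃ encoding: scanning left to right, each occurrence of the ternary
pair `12` becomes the binary pair `11`; otherwise the single trits `0`, `1`, `2`
become `00`, `01`, `10` respectively. -/
def enc : List (Fin 3) → List (Fin 2)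
  | [] => []
  | ⟨1, _⟩ :: ⟨2, _⟩ :: rest => 1 :: 1 :: enc rest
  | ⟨0, _⟩ :: rest => 0 :: 0 :: enc rest
  | ⟨1, _⟩ :: rest => 0 :: 1 :: enc rest
  | ⟨2, _⟩ :: rest => 1 :: 0 :: enc rest
  | ⟨n + 3, h⟩ :: _ => absurd h (by omega)

/-!
Every ternary symbol or `12`-pair is encoded by exactly one binary pair, and the four
pairs `00`, `01`, `10`, `11` are distinct, so reading the code two bits at a time
recovers the input: `enc` has a left inverse.
-/

def dec : List (Fin 2) → List (Fin 3)
  | 0 :: 0 :: r => 0 :: dec r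
  | 0 :: 1 :: r => 1 :: dec r
  | 1 :: 0 :: r => 2 :: dec r
  | 1 :: 1 :: r => 1 :: 2 :: dec r
  | _ => []

theorem dec_enc : Function.LeftInverse dec enc := by
  intro a
  induction a using enc.induct with
  | case1 => rfl
  | case2 _ _ rest ih => rw [enc.eq_2, dec, ih]; rfl
  | case3 _ rest ih => rw [enc.eq_3, dec, ih]; rfl
  | case4 _ rest not_two ih => rw [enc.eq_4 _ _ not_two, dec, ih]; rfl
  | case5 _ rest ih => rw [enc.eq_5, dec, ih]; rfl

theorem enc_injective : Function.Injective enc := dec_enc.injective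
end
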